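/- Let w = u·v with u ∈ W_J, v ∈ W^J be a parabolic decomposition where u = m(w,J) is the maximal element of W_J below w. Then the map x ↦ (y, z), where x = yz is the parabolic decomposition of x with y ∈ W_J, z ∈ W^J, is a bijection from {x ∈ W : x ≤ w} to {y ∈ W_J : y ≤ u} × {z ∈ W^J : z ≤ v}, and it preserves length in the sense that ℓ(x) = ℓ(y) + ℓ(z). -/

import Mathlib

variable {B : Type*} {W : Type*} [Group W] {M : CoxeterMatrix B}

/-- The standard parabolic subgroup `W_J` generated by the simple reflections in `J`. -/
def parabolicSubgroup (cs : CoxeterSystem M W) (J : Set B) : Subgroup W :=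
  Subgroup.closure (cs.simple '' J)

/-- Minimal-length representatives of the cosets `W_J\W`. -/
noncomputable def minCosetReps (cs : CoxeterSystem M W) (J : Set B) : Set W :=
  {v | ∀ u ∈ parabolicSubgroup cs J, cs.length v ≤ cs.length (u * v)}

/-- The Bruhat order on a Coxeter group. -/
def bruhatLE (cs : CoxeterSystem M W) : W → W → Prop :=
  Relation.ReflTransGen fun a b =>
    (∃ t, cs.IsReflection t ∧ b = t * a) ∧ cs.length a < cs.length b

/-!
Every `x ∈ W` factors uniquely as `x = y * z` with `y ∈ W_J`, `z ∈ W^J`, and then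
`ℓ x = ℓ y + ℓ z`. If `κ` and `ζ` are reduced words for `u` and `v`, then `κ ++ ζ` is a reduced
word for `w`, so by the subword property the elements below `w` are the products of subwords
`σ₁ ++ σ₂` with `σ₁ <+ κ` and `σ₂ <+ ζ`. The `W^J`-part of such a product is the `W^J`-part of
`π σ₂`, which lies below `π σ₂ ≤ v`; its `W_J`-part lies below `w`, hence below `u` by the
maximality of `u`. Conversely, `y ≤ u` and `z ≤ v` are subwords of `κ` and `ζ`, and their
concatenation gives `y * z ≤ w`.

The subword property and the length additivity rest on the strong exchange condition, proved for
arbitrary words through the sign representation of `W` on `W × ℤˣ`.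
-/

theorem mul_mul_inv_eq_iff_eq_inv_mul_mul {G : Type*} [Group G] (g t x : G) :
    g * t * g⁻¹ = x ↔ t = g⁻¹ * x * g := by
  constructor <;> rintro rfl <;> group

theorem Finset.prod_range_two_mul {α : Type*} [CommMonoid α] (f : ℕ → α) (m : ℕ) :
    ∏ n ∈ range (2 * m), f n = ∏ l ∈ range m, f (2 * l) * f (2 * l + 1) := by
  induction m with
  | zero => simp
  | succ m ih => simp [prod_range_succ, ih, mul_add, mul_assoc]

theorem Finset.prod_range_two_mul_eq_one_of_periodic {f : ℕ → ℤˣ} {m : ℕ}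
    (hf : Function.Periodic f m) : ∏ n ∈ range (2 * m), f n = 1 := by
  rw [two_mul, prod_range_add, ← prod_mul_distrib]
  exact prod_eq_one fun n _ ↦ by rw [add_comm, hf, Int.units_mul_self]

theorem Equiv.Perm.pow_apply_of_apply_eq_conj {G : Type*} [Group G]
    {F : Equiv.Perm (G × ℤˣ)} {g : G} {χ : G → ℤˣ}
    (hF : ∀ t ε, F (t, ε) = (g * t * g⁻¹, ε * χ t)) (k : ℕ) (t : G) (ε : ℤˣ) :
    (F ^ k) (t, ε) =
      (g ^ k * t * (g ^ k)⁻¹, ε * ∏ l ∈ Finset.range k, χ (g ^ l * t * (g ^ l)⁻¹)) := by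
  induction k with
  | zero => simp
  | succ k ih =>
    rw [pow_succ', Equiv.Perm.mul_apply, ih, hF, Finset.prod_range_succ, pow_succ']
    simp only [mul_inv_rev, mul_assoc]

namespace CoxeterSystem

open List

variable (cs : CoxeterSystem M W)

local prefix:100 "s " => cs.simple
local prefix:100 "π " => cs.wordProd
local prefix:100 "ℓ " => cs.length
local prefix:100 "ris " => cs.rightInvSeq
local prefix:100 "lis " => cs.leftInvSeq

section InversionSign

open scoped Classical

lemma simple_mul_mul_simple_eq_iff (i : B) (t x : W) :
    s i * t * s i = x ↔ t = s i * x * s i := by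
  constructor <;> rintro rfl <;> simp [mul_assoc]

lemma involutive_simpleReflFun (i : B) :
    Function.Involutive fun p : W × ℤˣ ↦
      (s i * p.1 * s i, p.2 * if p.1 = s i then -1 else 1) := by
  rintro ⟨t, ε⟩
  simp only [simple_mul_mul_simple_eq_iff, simple_mul_simple_self, one_mul]
  simp only [mul_assoc, simple_mul_simple_cancel_left, simple_mul_simple_self, mul_one,
    Int.units_mul_self]

-- Björner–Brenti §1.4, with all of `W` instead of the set of reflections as first factor.
noncomputable def simpleReflPerm (i : B) : Equiv.Perm (W × ℤˣ) :=
  (cs.involutive_simpleReflFun i).toPerm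

lemma simpleReflPerm_apply (i : B) (t : W) (ε : ℤˣ) :
    cs.simpleReflPerm i (t, ε) = (s i * t * s i, ε * if t = s i then -1 else 1) := rfl

-- With `c = s i * s j`, the `m`-th power of `simpleReflPerm i * simpleReflPerm j` flips the sign
-- of `(t, ε)` once for every `n < 2 * m` with `t = s j * c ^ n`; `c ^ m = 1` makes this even.
lemma isLiftable_simpleReflPerm : M.IsLiftable cs.simpleReflPerm := by
  intro i j
  set c := s i * s j
  have hc : s j * c * (s j)⁻¹ = c⁻¹ := by simp [c, mul_assoc]
  have hstep : ∀ t ε, (cs.simpleReflPerm i * cs.simpleReflPerm j) (t, ε) =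
      (c * t * c⁻¹, ε * ((if t = s j then -1 else 1) *
        if s j * t * s j = s i then -1 else 1)) := by
    intro t ε
    simp [simpleReflPerm_apply, c, mul_assoc]
  have hconj : ∀ l : ℕ, (c ^ l)⁻¹ * s j = s j * c ^ l := fun l ↦ by
    rw [← inv_pow, ← hc, conj_pow, inv_mul_cancel_right]
  ext ⟨t, ε⟩ : 1
  have hfirst : ∀ l : ℕ, c ^ l * t * (c ^ l)⁻¹ = s j ↔ t = s j * c ^ (2 * l) := fun l ↦ by
    rw [mul_mul_inv_eq_iff_eq_inv_mul_mul, hconj, mul_assoc, ← pow_add, two_mul]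
  have hsecond : ∀ l : ℕ,
      s j * (c ^ l * t * (c ^ l)⁻¹) * s j = s i ↔ t = s j * c ^ (2 * l + 1) := fun l ↦ by
    have : s j * s i * s j = s j * c := by simp [c, mul_assoc]
    rw [simple_mul_mul_simple_eq_iff, this, mul_mul_inv_eq_iff_eq_inv_mul_mul, ← mul_assoc,
      hconj, mul_assoc, mul_assoc, ← pow_succ', ← pow_add, show l + (l + 1) = 2 * l + 1 by omega]
  rw [Equiv.Perm.pow_apply_of_apply_eq_conj hstep]
  simp only [hfirst, hsecond]
  have hm : c ^ M i j = 1 := cs.simple_mul_simple_pow i j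
  rw [← Finset.prod_range_two_mul (fun n ↦ if t = s j * c ^ n then -1 else 1),
    Finset.prod_range_two_mul_eq_one_of_periodic fun n ↦ by rw [pow_add, hm, mul_one], hm]
  simp

noncomputable def reflRep : W →* Equiv.Perm (W × ℤˣ) :=
  cs.lift ⟨cs.simpleReflPerm, cs.isLiftable_simpleReflPerm⟩

noncomputable def inversionSign (w t : W) : ℤˣ := (cs.reflRep w (t, 1)).2

lemma reflRep_wordProd_apply (ω : List B) (t : W) (ε : ℤˣ) :
    cs.reflRep (π ω) (t, ε) = (π ω * t * (π ω)⁻¹, ε * (-1) ^ (ris ω).count t) := by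
  induction ω generalizing t ε with
  | nil => simp [wordProd_nil]
  | cons i ω ih =>
    have hrep : cs.reflRep (s i) = cs.simpleReflPerm i :=
      cs.lift_apply_simple cs.isLiftable_simpleReflPerm i
    rw [wordProd_cons, map_mul, Equiv.Perm.mul_apply, ih, hrep, simpleReflPerm_apply]
    refine Prod.ext ?_ ?_
    · simp only [mul_inv_rev, inv_simple, mul_assoc]
    · show _ = ε * (-1) ^ ((π ω)⁻¹ * s i * π ω :: ris ω).count t
      rw [mul_mul_inv_eq_iff_eq_inv_mul_mul, List.count_cons]
      by_cases ht : t = (π ω)⁻¹ * s i * π ω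
      · simp [ht, pow_succ]
      · simp [ht, Ne.symm ht]

lemma reflRep_apply (w t : W) (ε : ℤˣ) :
    cs.reflRep w (t, ε) = (w * t * w⁻¹, ε * cs.inversionSign w t) := by
  obtain ⟨ω, rfl⟩ := cs.wordProd_surjective w
  simp [inversionSign, reflRep_wordProd_apply]

lemma inversionSign_wordProd (ω : List B) (t : W) :
    cs.inversionSign (π ω) t = (-1) ^ (ris ω).count t := by
  simp [inversionSign, reflRep_wordProd_apply]

lemma inversionSign_mul (a b t : W) :
    cs.inversionSign (a * b) t = cs.inversionSign b t * cs.inversionSign a (b * t * b⁻¹) := by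
  have h : cs.reflRep (a * b) (t, 1) = cs.reflRep a (cs.reflRep b (t, 1)) := by
    rw [map_mul, Equiv.Perm.mul_apply]
  rw [reflRep_apply, reflRep_apply, reflRep_apply] at h
  simpa using congrArg Prod.snd h

lemma inversionSign_one (t : W) : cs.inversionSign 1 t = 1 := by
  simpa using cs.inversionSign_wordProd [] t

lemma inversionSign_simple_self (i : B) : cs.inversionSign (s i) (s i) = -1 := by
  simpa using cs.inversionSign_wordProd [i] (s i)

lemma inversionSign_self {t : W} (ht : cs.IsReflection t) : cs.inversionSign t t = -1 := by
  obtain ⟨w, i, rfl⟩ := ht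
  have hconj : w⁻¹ * (w * s i * w⁻¹) * w⁻¹⁻¹ = s i := by group
  have hw := cs.inversionSign_mul w w⁻¹ (w * s i * w⁻¹)
  rw [mul_inv_cancel, inversionSign_one, hconj] at hw
  rw [cs.inversionSign_mul (w * s i) w⁻¹, hconj, inversionSign_mul, mul_inv_cancel_right,
    inversionSign_simple_self, mul_left_comm, ← hw, mul_one]

lemma mem_rightInvSeq_of_inversionSign_eq_neg_one {ω : List B} {t : W}
    (h : cs.inversionSign (π ω) t = -1) : t ∈ ris ω := by
  rw [inversionSign_wordProd] at h
  refine List.count_pos_iff.mp (Nat.pos_of_ne_zero fun h0 ↦ ?_)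
  simp [h0] at h

lemma inversionSign_eq_neg_one_iff {w t : W} (ht : cs.IsReflection t) :
    cs.inversionSign w t = -1 ↔ cs.IsRightInversion w t := by
  have hinv : ∀ w, cs.inversionSign w t = -1 → cs.IsRightInversion w t := fun w h ↦ by
    obtain ⟨ω, hω, rfl⟩ := cs.exists_isReduced w
    exact cs.isRightInversion_of_mem_rightInvSeq hω
      (cs.mem_rightInvSeq_of_inversionSign_eq_neg_one h)
  refine ⟨hinv w, fun h ↦ (Int.units_eq_one_or _).resolve_left fun h1 ↦ ?_⟩
  -- a sign `1` would make `t` a right inversion of `w * t` as well as of `w`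
  have hwt : cs.inversionSign (w * t) t = -1 := by
    rw [inversionSign_mul, inversionSign_self cs ht, mul_inv_cancel_right, h1, mul_one]
  have h' := (hinv _ hwt).2
  rw [mul_assoc, ht.mul_self, mul_one] at h'
  exact lt_asymm h.2 h'

end InversionSign

theorem mem_rightInvSeq_of_isRightInversion {ω : List B} {t : W}
    (h : cs.IsRightInversion (π ω) t) : t ∈ ris ω :=
  cs.mem_rightInvSeq_of_inversionSign_eq_neg_one ((cs.inversionSign_eq_neg_one_iff h.1).mpr h)

theorem mem_leftInvSeq_of_isLeftInversion {ω : List B} {t : W}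
    (h : cs.IsLeftInversion (π ω) t) : t ∈ lis ω := by
  rw [← cs.isRightInversion_inv_iff, ← wordProd_reverse] at h
  simpa [rightInvSeq_reverse] using cs.mem_rightInvSeq_of_isRightInversion h

theorem exists_eraseIdx_of_isLeftInversion {ω : List B} {t : W}
    (h : cs.IsLeftInversion (π ω) t) : ∃ j < ω.length, t * π ω = π (ω.eraseIdx j) := by
  obtain ⟨j, hj, rfl⟩ := List.mem_iff_getElem.mp (cs.mem_leftInvSeq_of_isLeftInversion h)
  rw [length_leftInvSeq] at hj
  refine ⟨j, hj, ?_⟩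
  rw [← getD_leftInvSeq_mul_wordProd, List.getD_eq_getElem]

theorem exists_reduced_sublist (ω : List B) : ∃ σ, σ <+ ω ∧ cs.IsReduced σ ∧ π σ = π ω := by
  induction ω with
  | nil => exact ⟨[], Sublist.slnil, by simp [IsReduced], rfl⟩
  | cons i ω ih =>
    obtain ⟨σ, hσω, hσ, hπ⟩ := ih
    rcases cs.length_simple_mul (π σ) i with hlen | hlen
    · refine ⟨i :: σ, hσω.cons_cons i, ?_, by rw [wordProd_cons, wordProd_cons, hπ]⟩
      rw [IsReduced, wordProd_cons, hlen, hσ.eq, length_cons]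
    · obtain ⟨j, hj, he⟩ :=
        cs.exists_eraseIdx_of_isLeftInversion (ω := σ) ⟨cs.isReflection_simple i, by omega⟩
      refine ⟨σ.eraseIdx j, (eraseIdx_sublist σ j).trans (hσω.cons i), ?_,
        by rw [← he, hπ, wordProd_cons]⟩
      rw [IsReduced, ← he, length_eraseIdx_of_lt hj, ← hσ.eq]
      omega

lemma bruhatLE_of_eq_mul_left {a b t : W} (ht : cs.IsReflection t) (hb : b = t * a)
    (h : ℓ a < ℓ b) : bruhatLE cs a b :=
  .single ⟨⟨t, ht, hb⟩, h⟩

lemma bruhatLE_simple_mul_of_length_lt {a : W} {i : B} (h : ℓ a < ℓ (s i * a)) :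
    bruhatLE cs a (s i * a) :=
  cs.bruhatLE_of_eq_mul_left (cs.isReflection_simple i) rfl h

lemma simple_mul_bruhatLE_of_length_lt {a : W} {i : B} (h : ℓ (s i * a) < ℓ a) :
    bruhatLE cs (s i * a) a :=
  cs.bruhatLE_of_eq_mul_left (cs.isReflection_simple i) (simple_mul_simple_cancel_left ..).symm h

lemma wordProd_eraseIdx_bruhatLE {ω : List B} (hω : cs.IsReduced ω) (j : ℕ) :
    bruhatLE cs (π (ω.eraseIdx j)) (π ω) := by
  by_cases hj : j < ω.length
  · have hr : cs.IsReflection ((lis ω).getD j 1) := by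
      refine cs.isReflection_of_mem_leftInvSeq ω ?_
      rw [getD_eq_getElem _ _ (by simpa using hj)]
      exact getElem_mem _
    refine cs.bruhatLE_of_eq_mul_left hr ?_ ?_
    · rw [← getD_leftInvSeq_mul_wordProd, ← mul_assoc, hr.mul_self, one_mul]
    · have := cs.length_wordProd_le (ω.eraseIdx j)
      rw [length_eraseIdx_of_lt hj] at this
      rw [hω.eq]
      omega
  · rw [eraseIdx_of_length_le (by omega)]
    exact .refl

lemma simple_mul_bruhatLE_or_of_eq_mul_left {b c t : W} (ht : cs.IsReflection t)
    (hb : b = t * c) (hlt : ℓ c < ℓ b) (i : B) :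
    bruhatLE cs (s i * c) b ∨ bruhatLE cs (s i * c) (s i * b) := by
  have hcb : bruhatLE cs c b := cs.bruhatLE_of_eq_mul_left ht hb hlt
  rcases cs.length_simple_mul b i with hsb | hsb
  · right
    rcases cs.length_simple_mul c i with hsc | hsc
    · exact cs.bruhatLE_of_eq_mul_left (ht.conj (s i)) (by rw [hb]; group) (by omega)
    · exact (cs.simple_mul_bruhatLE_of_length_lt (by omega)).trans
        (hcb.trans (cs.bruhatLE_simple_mul_of_length_lt (by omega)))
  · left
    obtain ⟨ρ, hρ, hρπ⟩ := cs.exists_isReduced (s i * b)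
    have hbρ : b = π (i :: ρ) := by rw [wordProd_cons, ← hρπ, simple_mul_simple_cancel_left]
    have hc : t * π (i :: ρ) = c := by rw [← hbρ, hb, ← mul_assoc, ht.mul_self, one_mul]
    obtain ⟨j, -, hj⟩ := cs.exists_eraseIdx_of_isLeftInversion
      (ω := i :: ρ) ⟨ht, by rwa [hc, ← hbρ]⟩
    rw [hc] at hj
    cases j with
    | zero =>
      rw [hj, eraseIdx_cons_zero, ← hρπ, simple_mul_simple_cancel_left]
      exact .refl
    | succ j =>
      rw [hj, eraseIdx_cons_succ, wordProd_cons, simple_mul_simple_cancel_left]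
      exact (cs.wordProd_eraseIdx_bruhatLE hρ j).trans
        (hρπ ▸ cs.simple_mul_bruhatLE_of_length_lt (by omega))

theorem simple_mul_bruhatLE_or {a b : W} (h : bruhatLE cs a b) (i : B) :
    bruhatLE cs (s i * a) b ∨ bruhatLE cs (s i * a) (s i * b) := by
  induction h with
  | refl => exact .inr .refl
  | tail _ hstep ih =>
    obtain ⟨⟨t, ht, hbt⟩, hlt⟩ := hstep
    rcases ih with h | h
    · exact .inl (h.trans (cs.bruhatLE_of_eq_mul_left ht hbt hlt))
    · exact (cs.simple_mul_bruhatLE_or_of_eq_mul_left ht hbt hlt i).imp h.trans h.trans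

theorem wordProd_bruhatLE_of_sublist {σ ω : List B} (hσ : σ <+ ω) (hω : cs.IsReduced ω) :
    bruhatLE cs (π σ) (π ω) := by
  induction ω generalizing σ with
  | nil => rw [sublist_nil.mp hσ]; exact .refl
  | cons i ω ih =>
    have hω' : cs.IsReduced ω := by simpa using hω.drop 1
    have hstep : bruhatLE cs (π ω) (s i * π ω) := by
      refine cs.bruhatLE_simple_mul_of_length_lt ?_
      rw [← wordProd_cons, hω.eq, hω'.eq, length_cons]
      omega
    rw [wordProd_cons]
    cases hσ with
    | cons _ h => exact (ih h hω').trans hstep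
    | cons_cons _ h =>
      rw [wordProd_cons]
      exact (cs.simple_mul_bruhatLE_or (ih h hω') i).elim (·.trans hstep) id

theorem exists_sublist_of_bruhatLE {x : W} {ω : List B} (h : bruhatLE cs x (π ω)) :
    ∃ σ, σ <+ ω ∧ π σ = x := by
  induction h using Relation.ReflTransGen.head_induction_on with
  | refl => exact ⟨ω, .refl ω, rfl⟩
  | @head a _ hstep _ ih =>
    obtain ⟨⟨t, ht, rfl⟩, hlt⟩ := hstep
    obtain ⟨σ, hσω, hσ⟩ := ih
    have htt : t * (t * a) = a := by rw [← mul_assoc, ht.mul_self, one_mul]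
    obtain ⟨j, -, hj⟩ := cs.exists_eraseIdx_of_isLeftInversion (ω := σ)
      ⟨ht, by rwa [hσ, htt]⟩
    exact ⟨σ.eraseIdx j, (eraseIdx_sublist σ j).trans hσω, by rw [← hj, hσ, htt]⟩

variable (J : Set B)

lemma wordProd_mem_parabolicSubgroup {ω : List B} (hω : ∀ i ∈ ω, i ∈ J) :
    π ω ∈ parabolicSubgroup cs J := by
  refine list_prod_mem fun x hx ↦ ?_
  obtain ⟨i, hi, rfl⟩ := mem_map.mp hx
  exact Subgroup.subset_closure ⟨i, hω i hi, rfl⟩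

lemma exists_reduced_word_of_mem_parabolicSubgroup {x : W} (hx : x ∈ parabolicSubgroup cs J) :
    ∃ ω : List B, (∀ i ∈ ω, i ∈ J) ∧ cs.IsReduced ω ∧ π ω = x := by
  obtain ⟨ω, hωJ, rfl⟩ : ∃ ω : List B, (∀ i ∈ ω, i ∈ J) ∧ π ω = x := by
    induction hx using Subgroup.closure_induction with
    | mem _ hy =>
      obtain ⟨i, hi, rfl⟩ := hy
      exact ⟨[i], by simpa using hi, wordProd_singleton ..⟩
    | one => exact ⟨[], by simp, wordProd_nil ..⟩
    | mul _ _ _ _ ihy ihz =>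
      obtain ⟨ω, hω, rfl⟩ := ihy
      obtain ⟨ω', hω', rfl⟩ := ihz
      exact ⟨ω ++ ω', fun i hi ↦ (mem_append.mp hi).elim (hω i) (hω' i), wordProd_append ..⟩
    | inv _ _ ih =>
      obtain ⟨ω, hω, rfl⟩ := ih
      exact ⟨ω.reverse, by simpa using hω, wordProd_reverse ..⟩
  obtain ⟨σ, hσω, hσ, hπ⟩ := cs.exists_reduced_sublist ω
  exact ⟨σ, fun i hi ↦ hωJ i (hσω.subset hi), hσ, hπ⟩

theorem not_isLeftInversion_simple_of_mem_minCosetReps {j : B} {κ ζ : List B} (hj : j ∈ J)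
    (hκJ : ∀ i ∈ κ, i ∈ J) (hjκ : cs.IsReduced (j :: κ)) (hζ : cs.IsReduced ζ)
    (hz : π ζ ∈ minCosetReps cs J) : ¬cs.IsLeftInversion (π κ * π ζ) (s j) := by
  intro h
  rw [← wordProd_append] at h
  obtain ⟨l, hl, he⟩ := cs.exists_eraseIdx_of_isLeftInversion h
  rw [length_append] at hl
  rcases lt_or_ge l κ.length with hlκ | hlκ
  · rw [eraseIdx_append_of_lt_length hlκ, wordProd_append, wordProd_append, ← mul_assoc] at he
    have hlen := cs.length_wordProd_le (κ.eraseIdx l)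
    rw [← mul_right_cancel he, ← wordProd_cons, hjκ.eq, length_eraseIdx_of_lt hlκ,
      length_cons] at hlen
    omega
  · rw [eraseIdx_append_of_length_le hlκ, wordProd_append, wordProd_append] at he
    have hκP := cs.wordProd_mem_parabolicSubgroup J hκJ
    have hmin := hz _ <|
      mul_mem (mul_mem (inv_mem hκP) (Subgroup.subset_closure ⟨j, hj, rfl⟩)) hκP
    have hshort : (π κ)⁻¹ * s j * π κ * π ζ = π (ζ.eraseIdx (l - κ.length)) := by
      simp only [mul_assoc, he, inv_mul_cancel_left]
    have hlen := cs.length_wordProd_le (ζ.eraseIdx (l - κ.length))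
    rw [length_eraseIdx_of_lt (by omega), ← hshort] at hlen
    rw [hζ.eq] at hmin
    omega

theorem length_mul_of_mem_parabolicSubgroup_of_mem_minCosetReps {y z : W}
    (hy : y ∈ parabolicSubgroup cs J) (hz : z ∈ minCosetReps cs J) :
    ℓ (y * z) = ℓ y + ℓ z := by
  obtain ⟨κ, hκJ, hκ, rfl⟩ := cs.exists_reduced_word_of_mem_parabolicSubgroup J hy
  obtain ⟨ζ, hζ, rfl⟩ := cs.exists_isReduced z
  clear hy
  rw [hκ.eq]
  induction κ with
  | nil => simp
  | cons j κ ih =>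
    have hκJ' : ∀ i ∈ κ, i ∈ J := fun i hi ↦ hκJ i (mem_cons_of_mem j hi)
    specialize ih hκJ' (by simpa using hκ.drop 1)
    rw [wordProd_cons, mul_assoc, length_cons]
    rcases cs.length_simple_mul (π κ * π ζ) j with h | h
    · omega
    · exact absurd ⟨cs.isReflection_simple j, by omega⟩
        (cs.not_isLeftInversion_simple_of_mem_minCosetReps J (hκJ j mem_cons_self) hκJ' hκ hζ hz)

theorem exists_mem_parabolicSubgroup_mem_minCosetReps_mul_eq (x : W) :
    ∃ y ∈ parabolicSubgroup cs J, ∃ z ∈ minCosetReps cs J, y * z = x := by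
  obtain ⟨y, hy, hmin⟩ := exists_minimalFor_of_wellFoundedLT
    (· ∈ parabolicSubgroup cs J) (fun y ↦ ℓ (y * x)) ⟨1, one_mem _⟩
  refine ⟨y⁻¹, inv_mem hy, y * x, fun u hu ↦ ?_, inv_mul_cancel_left y x⟩
  rw [← mul_assoc]
  exact (le_total _ _).elim (hmin (mul_mem hu hy)) id

theorem eq_and_eq_of_mul_eq_mul {y z y' z' : W} (hy : y ∈ parabolicSubgroup cs J)
    (hz : z ∈ minCosetReps cs J) (hy' : y' ∈ parabolicSubgroup cs J)
    (hz' : z' ∈ minCosetReps cs J) (h : y * z = y' * z') : y = y' ∧ z = z' := by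
  obtain ⟨u, rfl⟩ : ∃ u, y = y' * u := ⟨y'⁻¹ * y, (mul_inv_cancel_left y' y).symm⟩
  have hu : u ∈ parabolicSubgroup cs J := by simpa using mul_mem (inv_mem hy') hy
  have huz : u * z = z' := mul_left_cancel (by rw [← mul_assoc, h])
  have h1 := cs.length_mul_of_mem_parabolicSubgroup_of_mem_minCosetReps J hu hz
  have h2 := cs.length_mul_of_mem_parabolicSubgroup_of_mem_minCosetReps J (inv_mem hu) hz'
  rw [← huz, inv_mul_cancel_left, length_inv] at h2
  obtain rfl : u = 1 := cs.length_eq_zero_iff.mp (by omega)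
  simpa using huz

noncomputable def parabolicMulEquiv : parabolicSubgroup cs J × minCosetReps cs J ≃ W :=
  Equiv.ofBijective (fun p ↦ p.1 * p.2)
    ⟨fun p q h ↦ by
      obtain ⟨h1, h2⟩ := cs.eq_and_eq_of_mul_eq_mul J p.1.2 p.2.2 q.1.2 q.2.2 h
      exact Prod.ext (Subtype.ext h1) (Subtype.ext h2),
    fun x ↦ by
      obtain ⟨y, hy, z, hz, rfl⟩ := cs.exists_mem_parabolicSubgroup_mem_minCosetReps_mul_eq J x
      exact ⟨(⟨y, hy⟩, ⟨z, hz⟩), rfl⟩⟩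

theorem bruhatLE_mul_and_bruhatLE_mul {y z : W} (hy : y ∈ parabolicSubgroup cs J)
    (hz : z ∈ minCosetReps cs J) : bruhatLE cs y (y * z) ∧ bruhatLE cs z (y * z) := by
  obtain ⟨κ, -, hκ, rfl⟩ := cs.exists_reduced_word_of_mem_parabolicSubgroup J hy
  obtain ⟨ζ, hζ, rfl⟩ := cs.exists_isReduced z
  have hred : cs.IsReduced (κ ++ ζ) := by
    rw [IsReduced, wordProd_append,
      cs.length_mul_of_mem_parabolicSubgroup_of_mem_minCosetReps J hy hz, hκ.eq, hζ.eq,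
      length_append]
  rw [← wordProd_append]
  exact ⟨cs.wordProd_bruhatLE_of_sublist (sublist_append_left κ ζ) hred,
    cs.wordProd_bruhatLE_of_sublist (sublist_append_right κ ζ) hred⟩

theorem mul_bruhatLE_iff {u v w y z : W} (hu : u ∈ parabolicSubgroup cs J) (hw : w = u * v)
    (hl : ℓ w = ℓ u + ℓ v)
    (hmax : ∀ y ∈ parabolicSubgroup cs J, bruhatLE cs y w → bruhatLE cs y u)
    (hy : y ∈ parabolicSubgroup cs J) (hz : z ∈ minCosetReps cs J) :
    bruhatLE cs (y * z) w ↔ bruhatLE cs y u ∧ bruhatLE cs z v := by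
  obtain ⟨κ, hκJ, hκ, rfl⟩ := cs.exists_reduced_word_of_mem_parabolicSubgroup J hu
  obtain ⟨ζ, hζ, rfl⟩ := cs.exists_isReduced v
  have hred : cs.IsReduced (κ ++ ζ) := by
    rw [IsReduced, wordProd_append, ← hw, hl, hκ.eq, hζ.eq, length_append]
  rw [← wordProd_append] at hw
  subst hw
  constructor
  · intro h
    refine ⟨hmax y hy ((cs.bruhatLE_mul_and_bruhatLE_mul J hy hz).1.trans h), ?_⟩
    obtain ⟨σ, hσ, hσyz⟩ := cs.exists_sublist_of_bruhatLE h
    obtain ⟨σ₁, σ₂, rfl, hσ₁, hσ₂⟩ := sublist_append_iff.mp hσ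
    obtain ⟨y', hy', z', hz', hyz'⟩ :=
      cs.exists_mem_parabolicSubgroup_mem_minCosetReps_mul_eq J (π σ₂)
    have hσ₁P : π σ₁ ∈ parabolicSubgroup cs J :=
      cs.wordProd_mem_parabolicSubgroup J fun i hi ↦ hκJ i (hσ₁.subset hi)
    obtain ⟨-, rfl⟩ := cs.eq_and_eq_of_mul_eq_mul J hy hz (mul_mem hσ₁P hy') hz'
      (by rw [← hσyz, wordProd_append, ← hyz', mul_assoc])
    exact (hyz' ▸ (cs.bruhatLE_mul_and_bruhatLE_mul J hy' hz).2).trans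
      (cs.wordProd_bruhatLE_of_sublist hσ₂ hζ)
  · rintro ⟨hyu, hzv⟩
    obtain ⟨σ₁, hσ₁, rfl⟩ := cs.exists_sublist_of_bruhatLE hyu
    obtain ⟨σ₂, hσ₂, rfl⟩ := cs.exists_sublist_of_bruhatLE hzv
    rw [← wordProd_append]
    exact cs.wordProd_bruhatLE_of_sublist (hσ₁.append hσ₂) hred

end CoxeterSystem

theorem parabolic_decomposition_bijection_general
    (cs : CoxeterSystem M W) (J : Set B) (w u v : W)
    (hu : u ∈ parabolicSubgroup cs J)
    (hw : w = u * v) (hl : cs.length w = cs.length u + cs.length v)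
    (hmax : ∀ y ∈ parabolicSubgroup cs J, bruhatLE cs y w → bruhatLE cs y u) :
    ∃ f : {x : W // bruhatLE cs x w} →
        {y : W // y ∈ parabolicSubgroup cs J ∧ bruhatLE cs y u} ×
        {z : W // z ∈ minCosetReps cs J ∧ bruhatLE cs z v},
      Function.Bijective f ∧
      ∀ x : {x : W // bruhatLE cs x w},
        (x : W) = (f x).1 * (f x).2 ∧
        cs.length x = cs.length ((f x).1 : W) + cs.length ((f x).2 : W) := by
  set e := cs.parabolicMulEquiv J
  have hle (x : W) :
      bruhatLE cs x w ↔ bruhatLE cs (e.symm x).1 u ∧ bruhatLE cs (e.symm x).2 v := by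
    conv_lhs => rw [← e.apply_symm_apply x]
    exact cs.mul_bruhatLE_iff J hu hw hl hmax (e.symm x).1.2 (e.symm x).2.2
  let f := (e.symm.subtypeEquiv (q := fun p ↦ bruhatLE cs p.1 u ∧ bruhatLE cs p.2 v) hle).trans <|
    Equiv.subtypeProdEquivProd.trans <| Equiv.prodCongr
      (Equiv.subtypeSubtypeEquivSubtypeInter (· ∈ parabolicSubgroup cs J) (bruhatLE cs · u))
      (Equiv.subtypeSubtypeEquivSubtypeInter (· ∈ minCosetReps cs J) (bruhatLE cs · v))
  have hx (x : {x : W // bruhatLE cs x w}) : (x : W) = (f x).1 * (f x).2 :=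
    (e.apply_symm_apply x).symm
  refine ⟨f, f.bijective, fun x ↦ ⟨hx x, ?_⟩⟩
  rw [hx x]
  exact cs.length_mul_of_mem_parabolicSubgroup_of_mem_minCosetReps J (f x).1.2.1 (f x).2.2.1

/-- parabolic decomposition gives a length-additive bijection
`{x ≤ w} ≃ {y ∈ W_J : y ≤ u} × {z ∈ W^J : z ≤ v}` when `u = m(w,J)`. -/
theorem parabolic_decomposition_bijection
    [Finite W] (cs : CoxeterSystem M W) (J : Set B) (w u v : W)
    (hu : u ∈ parabolicSubgroup cs J) (hv : v ∈ minCosetReps cs J)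
    (hw : w = u * v) (hl : cs.length w = cs.length u + cs.length v)
    (hmax : ∀ y ∈ parabolicSubgroup cs J, bruhatLE cs y w → bruhatLE cs y u) :
    ∃ f : {x : W // bruhatLE cs x w} →
        {y : W // y ∈ parabolicSubgroup cs J ∧ bruhatLE cs y u} ×
        {z : W // z ∈ minCosetReps cs J ∧ bruhatLE cs z v},
      Function.Bijective f ∧
      ∀ x : {x : W // bruhatLE cs x w},
        (x : W) = (f x).1 * (f x).2 ∧
        cs.length x = cs.length ((f x).1 : W) + cs.length ((f x).2 : W) :=
  parabolic_decomposition_bijection_general cs J w u v hu hw hl hmax
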